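/- Let n ≥ 1 be an integer, N an integer with 0 ≤ N ≤ n−1, and a₁,…,a_N ≥ 0 real numbers. Let U ⊂ ℂⁿ be the open unit polydisk, D = ⋃_{k=1}^N {z_k = 0}, and ψ(z) = log(|z_n|² ∏_{k=1}^N |z_k|^{2a_k}). Fix a continuous g : ℂ^{n−1} → ℝ with compact support contained in {z′ : |z′_i| < 1 for all i, and z′_k ≠ 0 for 1 ≤ k ≤ N}, and let g̃₁ and g̃₂ be two continuous functions ℂⁿ → ℝ, each with compact support disjoint from D, such that g̃ⱼ(z′, 0) = g(z′) for j = 1, 2 and all z′ with z′_k ≠ 0 (1 ≤ k ≤ N). Then limsup_{t→−∞} ∫_{U ∩ {t < ψ < t+1}} g̃₁ e^{−ψ} dλ_{2n} ≤ liminf_{t→−∞} ∫_{U ∩ {t < ψ < t+1}} g̃₂ e^{−ψ} dλ_{2n}. In particular, whenever the two limits exist they are equal, i.e. the limit is independent of the choice of compactly supported continuous extension of g. -/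

import Mathlib

/-
Write `z = (z', w)` with `w = z_n` and `Q(z') = ∏ₖ |z_k|^{2aₖ}`, so that `ψ = log (|w|² Q(z'))`.
For fixed `z'` with `Q(z') > 0` the slice of the band `t < ψ < t + 1` is the annulus
`e^t < |w|² Q(z') < e^{t+1}`: there `e^{-ψ} = 1 / (|w|² Q(z'))` has total mass `π / Q(z')`
for every `t ≤ -1`, while the annulus shrinks to `w = 0` as `t → -∞`. Hence the slice integrals
of `g̃ e^{-ψ}` tend to `π g̃(z', 0) / Q(z')`. On the support of `g̃`, which stays away from `D`,
`Q` is bounded below, so the slice integrals are uniformly bounded and dominated convergence gives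
`∫_{U ∩ {t < ψ < t + 1}} g̃ e^{-ψ} → π ∫_{|z'ᵢ| < 1} g̃(z', 0) / Q(z') dz'`.
The limit only sees `g̃` on `Y`, where both extensions equal `g` off `D` and vanish on `D`.
-/

open MeasureTheory Filter Real Set
open scoped ENNReal Topology

lemma setIntegral_inv_norm_sq_annulus {r₀ r₁ : ℝ} (h₀ : 0 < r₀) (h₀₁ : r₀ ≤ r₁) :
    ∫ w : ℂ in norm ⁻¹' Ioo r₀ r₁, (‖w‖ ^ 2)⁻¹ = 2 * π * (log r₁ - log r₀) := by
  have hradial : ∫ r in Ioi (0 : ℝ), r ^ (2 - 1) • (Ioo r₀ r₁).indicator (fun r => (r ^ 2)⁻¹) r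
      = log r₁ - log r₀ := by
    have hr : ∀ r : ℝ, r ^ (2 - 1) • (Ioo r₀ r₁).indicator (fun r => (r ^ 2)⁻¹) r
        = (Ioo r₀ r₁).indicator (fun r => r⁻¹) r := by
      intro r
      by_cases hr : r ∈ Ioo r₀ r₁
      · have : r ≠ 0 := (h₀.trans hr.1).ne'
        simp [indicator_of_mem hr]
        field_simp
      · simp [indicator_of_notMem hr]
    simp_rw [hr]
    rw [setIntegral_indicator measurableSet_Ioo,
      inter_eq_right.2 (Ioo_subset_Ioi_self.trans (Ioi_subset_Ioi h₀.le)),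
      ← integral_Ioc_eq_integral_Ioo, ← intervalIntegral.integral_of_le h₀₁,
      integral_inv_of_pos h₀ (h₀.trans_le h₀₁), log_div (h₀.trans_le h₀₁).ne' h₀.ne']
  calc ∫ w : ℂ in norm ⁻¹' Ioo r₀ r₁, (‖w‖ ^ 2)⁻¹
      = ∫ w : ℂ, (Ioo r₀ r₁).indicator (fun r => (r ^ 2)⁻¹) ‖w‖ := by
        rw [← integral_indicator (measurableSet_Ioo.preimage measurable_norm)]
        rfl
    _ = 2 * π * (log r₁ - log r₀) := by
        rw [integral_fun_norm_addHaar, Complex.finrank_real_complex, hradial, measureReal_def,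
          Complex.volume_ball]
        simp
        ring

def logBand (Q t : ℝ) : Set ℂ := {w | log (‖w‖ ^ 2 * Q) ∈ Ioo t (t + 1)}

lemma measurableSet_logBand (Q t : ℝ) : MeasurableSet (logBand Q t) :=
  measurableSet_Ioo.preimage (by fun_prop)

section LogBand

variable {Q t C : ℝ} {φ : ℂ → ℝ}

/-- The hypothesis `t ≤ -1` keeps `w = 0` out of the band, where `Real.log 0 = 0`. -/
lemma logBand_eq_annulus (hQ : 0 < Q) (ht : t ≤ -1) :
    logBand Q t = norm ⁻¹' Ioo (exp ((t - log Q) / 2)) (exp ((t + 1 - log Q) / 2)) := by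
  ext w
  rcases eq_or_ne w 0 with rfl | hw
  · simp only [logBand, mem_ofPred_eq, mem_preimage, norm_zero]
    exact iff_of_false (fun h => by norm_num at h; linarith [h.2])
      fun h => (exp_pos _).asymm h.1
  · have hw : 0 < ‖w‖ := norm_pos_iff.2 hw
    have hlog : log (‖w‖ ^ 2 * Q) = 2 * log ‖w‖ + log Q := by
      rw [log_mul (by positivity) hQ.ne', log_pow]; norm_num
    simp only [logBand, mem_ofPred_eq, mem_preimage, mem_Ioo, hlog, ← lt_log_iff_exp_lt hw,
      ← log_lt_iff_lt_exp hw]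
    constructor <;> rintro ⟨h₁, h₂⟩ <;> constructor <;> linarith

lemma exp_neg_log_eq_inv_of_mem_logBand (hQ : 0 < Q) (ht : t ≤ -1) {w : ℂ}
    (hw : w ∈ logBand Q t) : exp (-log (‖w‖ ^ 2 * Q)) = (‖w‖ ^ 2 * Q)⁻¹ := by
  rw [logBand_eq_annulus hQ ht] at hw
  have : 0 < ‖w‖ := (exp_pos _).trans hw.1
  rw [exp_neg, exp_log (by positivity)]

lemma setIntegral_logBand_weight (hQ : 0 < Q) (ht : t ≤ -1) :
    ∫ w in logBand Q t, exp (-log (‖w‖ ^ 2 * Q)) = π / Q := by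
  rw [setIntegral_congr_fun (measurableSet_logBand Q t)
    fun w hw => exp_neg_log_eq_inv_of_mem_logBand hQ ht hw, logBand_eq_annulus hQ ht]
  simp_rw [mul_inv, integral_mul_const]
  rw [setIntegral_inv_norm_sq_annulus (exp_pos _) (exp_le_exp.2 (by linarith)), log_exp, log_exp]
  field_simp
  ring

lemma integrableOn_logBand_weight (hQ : 0 < Q) (ht : t ≤ -1) :
    IntegrableOn (fun w => exp (-log (‖w‖ ^ 2 * Q))) (logBand Q t) :=
  .of_integral_ne_zero (by rw [setIntegral_logBand_weight hQ ht]; positivity)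

lemma integrableOn_logBand_mul (hQ : 0 < Q) (ht : t ≤ -1) (hφ : AEStronglyMeasurable φ)
    (hC : ∀ w ∈ logBand Q t, ‖φ w‖ ≤ C) :
    IntegrableOn (fun w => φ w * exp (-log (‖w‖ ^ 2 * Q))) (logBand Q t) :=
  (integrableOn_logBand_weight hQ ht).bdd_mul hφ.restrict
    (ae_restrict_of_forall_mem (measurableSet_logBand Q t) hC)

lemma integral_norm_logBand_mul_le (hQ : 0 < Q) (ht : t ≤ -1) (hφ : AEStronglyMeasurable φ)
    (hC : ∀ w ∈ logBand Q t, ‖φ w‖ ≤ C) :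
    ∫ w in logBand Q t, ‖φ w * exp (-log (‖w‖ ^ 2 * Q))‖ ≤ C * (π / Q) := by
  calc ∫ w in logBand Q t, ‖φ w * exp (-log (‖w‖ ^ 2 * Q))‖
      ≤ ∫ w in logBand Q t, C * exp (-log (‖w‖ ^ 2 * Q)) := by
        refine setIntegral_mono_on (integrableOn_logBand_mul hQ ht hφ hC).norm
          ((integrableOn_logBand_weight hQ ht).const_mul C) (measurableSet_logBand Q t)
          fun w hw => ?_
        rw [norm_mul, Real.norm_of_nonneg (exp_pos _).le]
        exact mul_le_mul_of_nonneg_right (hC w hw) (exp_pos _).le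
    _ = C * (π / Q) := by rw [integral_const_mul, setIntegral_logBand_weight hQ ht]

lemma tendsto_setIntegral_logBand_mul (hQ : 0 < Q) (hφ : AEStronglyMeasurable φ)
    (hC : ∀ w, ‖φ w‖ ≤ C) (hφ₀ : ContinuousAt φ 0) :
    Tendsto (fun t => ∫ w in logBand Q t, φ w * exp (-log (‖w‖ ^ 2 * Q))) atBot
      (𝓝 (φ 0 * (π / Q))) := by
  rw [Metric.tendsto_nhds]
  intro ε hε
  obtain ⟨δ, hδ, hφδ⟩ := Metric.continuousAt_iff.1 hφ₀ (ε / (2 * (π / Q))) (by positivity)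
  filter_upwards [eventually_le_atBot (min (-1) (2 * log δ + log Q - 1))] with t ht
  have ht₁ : t ≤ -1 := ht.trans (min_le_left _ _)
  have hnear : ∀ w ∈ logBand Q t, ‖φ w - φ 0‖ ≤ ε / (2 * (π / Q)) := by
    intro w hw
    rw [logBand_eq_annulus hQ ht₁] at hw
    refine (hφδ ?_).le
    rw [dist_zero_right]
    refine hw.2.trans_le ((exp_le_exp.2 ?_).trans_eq (exp_log hδ))
    linarith [ht.trans (min_le_right _ _)]
  rw [dist_eq_norm, ← setIntegral_logBand_weight hQ ht₁, ← integral_const_mul,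
    ← integral_sub (integrableOn_logBand_mul hQ ht₁ hφ fun w _ => hC w)
      ((integrableOn_logBand_weight hQ ht₁).const_mul _)]
  simp_rw [← sub_mul]
  calc _ ≤ _ := norm_integral_le_integral_norm _
    _ ≤ _ := integral_norm_logBand_mul_le hQ ht₁ (hφ.sub aestronglyMeasurable_const) hnear
    _ < ε := by field_simp; linarith

end LogBand

section Fibred

variable {X : Type*} [MeasurableSpace X] {μ : Measure X} {Q : X → ℝ} {h : X × ℂ → ℝ}
  {C q t : ℝ} {K : Set X}

lemma measurableSet_logBand_prod (hQ : Measurable Q) (t : ℝ) :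
    MeasurableSet {p : X × ℂ | p.2 ∈ logBand (Q p.1) t} :=
  measurableSet_Ioo.preimage (by fun_prop)

lemma integral_norm_logBand_slice_le (hh : Measurable h) (hC : ∀ p, ‖h p‖ ≤ C) (hq : 0 < q)
    (hQK : ∀ x ∈ K, q ≤ Q x) (hhK : ∀ x ∉ K, ∀ w, h (x, w) = 0) (ht : t ≤ -1) (x : X) :
    ∫ w, ‖{p : X × ℂ | p.2 ∈ logBand (Q p.1) t}.indicator
        (fun p => h p * exp (-log (‖p.2‖ ^ 2 * Q p.1))) (x, w)‖ ≤
      K.indicator (fun _ => C * (π / q)) x := by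
  change ∫ w, ‖(logBand (Q x) t).indicator (fun w => h (x, w) * exp (-log (‖w‖ ^ 2 * Q x))) w‖
    ≤ _
  simp_rw [norm_indicator_eq_indicator_norm]
  rw [integral_indicator (measurableSet_logBand _ t)]
  by_cases hx : x ∈ K
  · have hQx : 0 < Q x := hq.trans_le (hQK x hx)
    have hC₀ : 0 ≤ C := (norm_nonneg _).trans (hC (x, 0))
    rw [indicator_of_mem hx]
    refine (integral_norm_logBand_mul_le hQx ht
      (hh.comp measurable_prodMk_left).aestronglyMeasurable fun w _ => hC (x, w)).trans ?_
    gcongr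
    exact hQK x hx
  · simp [indicator_of_notMem hx, hhK x hx]

lemma integrable_logBand_prod [SFinite μ] (hQ : Measurable Q) (hh : Measurable h)
    (hC : ∀ p, ‖h p‖ ≤ C) (hK : MeasurableSet K) (hKμ : μ K ≠ ∞) (hq : 0 < q)
    (hQK : ∀ x ∈ K, q ≤ Q x) (hhK : ∀ x ∉ K, ∀ w, h (x, w) = 0) (ht : t ≤ -1) :
    Integrable ({p : X × ℂ | p.2 ∈ logBand (Q p.1) t}.indicator
      fun p => h p * exp (-log (‖p.2‖ ^ 2 * Q p.1))) (μ.prod volume) := by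
  have hF : Measurable ({p : X × ℂ | p.2 ∈ logBand (Q p.1) t}.indicator
      fun p => h p * exp (-log (‖p.2‖ ^ 2 * Q p.1))) :=
    (by fun_prop : Measurable _).indicator (measurableSet_logBand_prod hQ t)
  refine (integrable_prod_iff hF.aestronglyMeasurable).2 ⟨ae_of_all _ fun x => ?_, ?_⟩
  · by_cases hx : x ∈ K
    · exact (integrableOn_logBand_mul (hq.trans_le (hQK x hx)) ht
        (hh.comp measurable_prodMk_left).aestronglyMeasurable
        fun w _ => hC (x, w)).integrable_indicator (measurableSet_logBand _ t)
    · refine (integrable_zero ℂ ℝ volume).congr (ae_of_all _ fun w => ?_)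
      exact (indicator_apply_eq_zero.2 fun _ => by simp only [hhK x hx, zero_mul]).symm
  · refine ((integrable_indicator_iff hK).2 (integrableOn_const (C := C * (π / q)) hKμ)).mono'
      hF.norm.aestronglyMeasurable.integral_prod_right' (ae_of_all _ fun x => ?_)
    rw [Real.norm_of_nonneg (integral_nonneg fun _ => norm_nonneg _)]
    exact integral_norm_logBand_slice_le hh hC hq hQK hhK ht x

theorem tendsto_setIntegral_logBand_prod [SFinite μ] (hQ : Measurable Q) (hh : Measurable h)
    (hC : ∀ p, ‖h p‖ ≤ C) (hK : MeasurableSet K) (hKμ : μ K ≠ ∞) (hq : 0 < q)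
    (hQK : ∀ x ∈ K, q ≤ Q x) (hhK : ∀ x ∉ K, ∀ w, h (x, w) = 0)
    (hcont : ∀ᵐ x ∂μ, ContinuousAt (fun w => h (x, w)) 0) :
    Tendsto (fun t => ∫ p in {p : X × ℂ | p.2 ∈ logBand (Q p.1) t},
        h p * exp (-log (‖p.2‖ ^ 2 * Q p.1)) ∂μ.prod volume) atBot
      (𝓝 (∫ x, h (x, 0) * (π / Q x) ∂μ)) := by
  set F : ℝ → X × ℂ → ℝ := fun t => {p : X × ℂ | p.2 ∈ logBand (Q p.1) t}.indicator
    fun p => h p * exp (-log (‖p.2‖ ^ 2 * Q p.1))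
  have hFm : ∀ t, Measurable (F t) := fun t =>
    (by fun_prop : Measurable _).indicator (measurableSet_logBand_prod hQ t)
  have hslice : ∀ t (x : X), ∫ w, F t (x, w) =
      ∫ w in logBand (Q x) t, h (x, w) * exp (-log (‖w‖ ^ 2 * Q x)) := fun t x =>
    integral_indicator (f := fun w => h (x, w) * exp (-log (‖w‖ ^ 2 * Q x)))
      (s := logBand (Q x) t) (measurableSet_logBand _ t)
  have hfubini : ∀ᶠ t in atBot, ∫ x, (∫ w, F t (x, w)) ∂μ =
      ∫ p in {p : X × ℂ | p.2 ∈ logBand (Q p.1) t},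
        h p * exp (-log (‖p.2‖ ^ 2 * Q p.1)) ∂μ.prod volume := by
    filter_upwards [eventually_le_atBot (-1)] with t ht
    rw [← integral_indicator (measurableSet_logBand_prod hQ t),
      integral_prod _ (integrable_logBand_prod hQ hh hC hK hKμ hq hQK hhK ht)]
  refine (tendsto_integral_filter_of_dominated_convergence (K.indicator fun _ => C * (π / q))
    (.of_forall fun t => (hFm t).aestronglyMeasurable.integral_prod_right') ?_
    ((integrable_indicator_iff hK).2 (integrableOn_const hKμ)) ?_).congr' hfubini
  · filter_upwards [eventually_le_atBot (-1)] with t ht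
    exact ae_of_all _ fun x => (norm_integral_le_integral_norm _).trans
      (integral_norm_logBand_slice_le hh hC hq hQK hhK ht x)
  · filter_upwards [hcont] with x hx
    simp_rw [hslice]
    by_cases hxK : x ∈ K
    · exact tendsto_setIntegral_logBand_mul (hq.trans_le (hQK x hxK))
        (hh.comp measurable_prodMk_left).aestronglyMeasurable (fun w => hC (x, w)) hx
    · simp [hhK x hxK]

end Fibred

def finSnocMeasurableEquiv (α : Type*) [MeasurableSpace α] (m : ℕ) :
    (Fin m → α) × α ≃ᵐ (Fin (m + 1) → α) :=
  MeasurableEquiv.prodComm.trans (MeasurableEquiv.piFinSuccAbove (fun _ => α) (Fin.last m)).symm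

@[simp]
lemma finSnocMeasurableEquiv_apply {α : Type*} [MeasurableSpace α] {m : ℕ}
    (p : (Fin m → α) × α) : finSnocMeasurableEquiv α m p = Fin.snoc p.1 p.2 := by
  simp [finSnocMeasurableEquiv, Fin.snocEquiv, MeasurableEquiv.prodComm]

lemma volume_preserving_finSnocMeasurableEquiv (α : Type*) [MeasureSpace α]
    [SigmaFinite (volume : Measure α)] (m : ℕ) :
    MeasurePreserving (finSnocMeasurableEquiv α m) :=
  (volume_preserving_piFinSuccAbove (fun _ => α) (Fin.last m)).symm.comp
    Measure.measurePreserving_swap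

lemma measurableSet_unitPolydisc {ι : Type*} [Countable ι] :
    MeasurableSet {z : ι → ℂ | ∀ i, ‖z i‖ < 1} := by
  simp only [ofPred_forall]
  exact .iInter fun i => measurableSet_lt (by fun_prop) measurable_const

section Polydisc

variable {m : ℕ} {f : (Fin (m + 1) → ℂ) → ℝ}

lemma continuousAt_indicator_unitPolydisc_snoc (hf : Continuous f) (x : Fin m → ℂ) :
    ContinuousAt (fun w => {z | ∀ i, ‖z i‖ < 1}.indicator f (Fin.snoc x w)) 0 := by
  by_cases hx : ∀ i, ‖x i‖ < 1
  · refine (hf.comp (by fun_prop : Continuous fun w : ℂ => (Fin.snoc x w : Fin (m + 1) → ℂ)))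
      |>.continuousAt.congr ?_
    filter_upwards [Metric.ball_mem_nhds (0 : ℂ) one_pos] with w hw
    refine (indicator_of_mem (fun i => ?_) f).symm
    induction i using Fin.lastCases with
    | last => simpa using hw
    | cast j => simpa using hx j
  · push Not at hx
    obtain ⟨i, hi⟩ := hx
    have hzero : (fun w => {z | ∀ i, ‖z i‖ < 1}.indicator f (Fin.snoc x w)) = fun _ => 0 :=
      funext fun w => indicator_of_notMem (fun h => (h i.castSucc).not_ge (by simpa using hi)) f
    rw [hzero]
    exact continuousAt_const

lemma integral_indicator_unitPolydisc_snoc_zero (c : (Fin m → ℂ) → ℝ) :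
    ∫ x, {z | ∀ i, ‖z i‖ < 1}.indicator f (Fin.snoc x 0) * c x =
      ∫ x in {x : Fin m → ℂ | ∀ i, ‖x i‖ < 1}, f (Fin.snoc x 0) * c x := by
  rw [← integral_indicator measurableSet_unitPolydisc]
  congr 1 with x
  have hsnoc : (Fin.snoc x 0 : Fin (m + 1) → ℂ) ∈ {z | ∀ i, ‖z i‖ < 1} ↔ ∀ i, ‖x i‖ < 1 := by
    simp [Fin.forall_fin_succ']
  by_cases hx : ∀ i, ‖x i‖ < 1
  · rw [indicator_of_mem (hsnoc.2 hx), indicator_of_mem (show x ∈ {x | ∀ i, ‖x i‖ < 1} from hx)]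
  · rw [indicator_of_notMem (hsnoc.not.2 hx),
      indicator_of_notMem (show x ∉ {x | ∀ i, ‖x i‖ < 1} from hx), zero_mul]

lemma setIntegral_unitPolydisc_logBand_eq_prod (Q : (Fin m → ℂ) → ℝ) (t : ℝ) :
    ∫ z in {z : Fin (m + 1) → ℂ | (∀ i, ‖z i‖ < 1) ∧
        t < log (‖z (Fin.last m)‖ ^ 2 * Q (Fin.init z)) ∧
        log (‖z (Fin.last m)‖ ^ 2 * Q (Fin.init z)) < t + 1},
        f z * exp (-log (‖z (Fin.last m)‖ ^ 2 * Q (Fin.init z))) =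
      ∫ p in {p : (Fin m → ℂ) × ℂ | p.2 ∈ logBand (Q p.1) t},
        {z | ∀ i, ‖z i‖ < 1}.indicator f (Fin.snoc p.1 p.2) *
          exp (-log (‖p.2‖ ^ 2 * Q p.1)) ∂volume.prod volume := by
  set B : Set (Fin (m + 1) → ℂ) :=
    {z | log (‖z (Fin.last m)‖ ^ 2 * Q (Fin.init z)) ∈ Ioo t (t + 1)}
  calc _ = ∫ z in B ∩ {z | ∀ i, ‖z i‖ < 1},
        f z * exp (-log (‖z (Fin.last m)‖ ^ 2 * Q (Fin.init z))) := by rw [inter_comm]; rfl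
    _ = ∫ z in B, {z | ∀ i, ‖z i‖ < 1}.indicator f z *
          exp (-log (‖z (Fin.last m)‖ ^ 2 * Q (Fin.init z))) := by
        rw [← setIntegral_indicator measurableSet_unitPolydisc]
        exact integral_congr_ae (ae_of_all _ fun z => indicator_mul_left _ f
          fun z => exp (-log (‖z (Fin.last m)‖ ^ 2 * Q (Fin.init z))))
    _ = _ := by
        rw [← (volume_preserving_finSnocMeasurableEquiv ℂ m).setIntegral_preimage_emb
          (MeasurableEquiv.measurableEmbedding _)]
        simp [B, logBand]
        rfl

theorem tendsto_setIntegral_unitPolydisc_logBand {Q : (Fin m → ℂ) → ℝ} (hQm : Measurable Q)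
    (hf : Continuous f) (hfc : HasCompactSupport f)
    (hQ : ∀ z ∈ tsupport f, 0 < Q (Fin.init z) ∧ ContinuousAt Q (Fin.init z)) :
    Tendsto (fun t => ∫ z in {z : Fin (m + 1) → ℂ | (∀ i, ‖z i‖ < 1) ∧
        t < log (‖z (Fin.last m)‖ ^ 2 * Q (Fin.init z)) ∧
        log (‖z (Fin.last m)‖ ^ 2 * Q (Fin.init z)) < t + 1},
        f z * exp (-log (‖z (Fin.last m)‖ ^ 2 * Q (Fin.init z)))) atBot
      (𝓝 (∫ x in {x : Fin m → ℂ | ∀ i, ‖x i‖ < 1}, f (Fin.snoc x 0) * (π / Q x))) := by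
  set K : Set (Fin m → ℂ) := Fin.init '' tsupport f
  have hK : IsCompact K := hfc.image (by fun_prop)
  obtain ⟨q, hq, hqK⟩ : ∃ q, 0 < q ∧ ∀ x ∈ K, q ≤ Q x :=
    hK.exists_forall_le' (fun _ ⟨z, hz, hzx⟩ => hzx ▸ (hQ z hz).2.continuousWithinAt)
      fun _ ⟨z, hz, hzx⟩ => hzx ▸ (hQ z hz).1
  obtain ⟨C, hC⟩ := hfc.exists_bound_of_continuous hf
  have hfK : ∀ x ∉ K, ∀ w, {z | ∀ i, ‖z i‖ < 1}.indicator f (Fin.snoc x w) = 0 :=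
    fun x hx w => indicator_apply_eq_zero.2 fun _ =>
      image_eq_zero_of_notMem_tsupport fun hz => hx ⟨_, hz, Fin.init_snoc _ _⟩
  rw [← integral_indicator_unitPolydisc_snoc_zero]
  simp_rw [setIntegral_unitPolydisc_logBand_eq_prod]
  exact tendsto_setIntegral_logBand_prod hQm
    ((hf.measurable.indicator measurableSet_unitPolydisc).comp (by fun_prop))
    (fun p => (norm_indicator_le_norm_self _ _).trans (hC _)) hK.isClosed.measurableSet
    hK.measure_lt_top.ne hq hqK hfK (ae_of_all _ (continuousAt_indicator_unitPolydisc_snoc hf))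

end Polydisc

lemma continuousAt_prod_norm_rpow {ι κ : Type*} [Fintype κ] {x : ι → ℂ} (j : κ → ι) (b : κ → ℝ)
    (hx : ∀ k, x (j k) ≠ 0) : ContinuousAt (fun y : ι → ℂ => ∏ k, ‖y (j k)‖ ^ b k) x :=
  tendsto_finsetProd _ fun k _ =>
    (continuous_apply (j k)).norm.continuousAt.rpow_const (.inl (norm_ne_zero_iff.2 (hx k)))

/-- Step 1 in the proof of Lemma 3.4 of the paper: the limit defining the Ohsawa
measure in the snc local model does not depend on the chosen continuous compactly
supported extension `g̃` of `g`: for any two admissible extensions `gext₁, gext₂`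
of the same `g`, the limsup of the integrals for `gext₁` is at most the liminf of
the integrals for `gext₂` (hence whenever the limits exist they coincide). -/
theorem ohsawa_measure_snc_model_extension_independent
    (n N : ℕ) (hn : 1 ≤ n) (hN : N ≤ n - 1)
    (a : Fin N → ℝ)
    (ψ : (Fin n → ℂ) → ℝ)
    (hψ : ∀ z : Fin n → ℂ, ψ z =
      Real.log ((‖z ⟨n - 1, by omega⟩‖) ^ 2 *
        ∏ k : Fin N, ‖z (Fin.castLE (hN.trans (Nat.sub_le n 1)) k)‖ ^ (2 * a k)))
    (g : (Fin (n - 1) → ℂ) → ℝ)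
    (gext₁ gext₂ : (Fin n → ℂ) → ℝ)
    (hgext₁ : Continuous gext₁) (hgextsupp₁ : HasCompactSupport gext₁)
    (hgextD₁ : ∀ z ∈ tsupport gext₁, ∀ k : Fin N,
      z (Fin.castLE (hN.trans (Nat.sub_le n 1)) k) ≠ 0)
    (hrestr₁ : ∀ z' : Fin (n - 1) → ℂ, (∀ k : Fin N, z' (Fin.castLE hN k) ≠ 0) →
      gext₁ (fun i : Fin n => if h : (i : ℕ) < n - 1 then z' ⟨i, h⟩ else 0) = g z')
    (hgext₂ : Continuous gext₂) (hgextsupp₂ : HasCompactSupport gext₂)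
    (hgextD₂ : ∀ z ∈ tsupport gext₂, ∀ k : Fin N,
      z (Fin.castLE (hN.trans (Nat.sub_le n 1)) k) ≠ 0)
    (hrestr₂ : ∀ z' : Fin (n - 1) → ℂ, (∀ k : Fin N, z' (Fin.castLE hN k) ≠ 0) →
      gext₂ (fun i : Fin n => if h : (i : ℕ) < n - 1 then z' ⟨i, h⟩ else 0) = g z') :
    limsup (fun t : ℝ =>
        ∫ z in {z : Fin n → ℂ | (∀ i, ‖z i‖ < 1) ∧
            t < ψ z ∧ ψ z < t + 1}, gext₁ z * Real.exp (-ψ z)) atBot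
      ≤ liminf (fun t : ℝ =>
        ∫ z in {z : Fin n → ℂ | (∀ i, ‖z i‖ < 1) ∧
            t < ψ z ∧ ψ z < t + 1}, gext₂ z * Real.exp (-ψ z)) atBot := by
  obtain _ | m := n
  · omega
  set Q : (Fin m → ℂ) → ℝ := fun x => ∏ k : Fin N, ‖x (Fin.castLE hN k)‖ ^ (2 * a k)
  obtain rfl : ψ = fun z => log (‖z (Fin.last m)‖ ^ 2 * Q (Fin.init z)) := funext hψ
  have hQ : ∀ gext : (Fin (m + 1) → ℂ) → ℝ,
      (∀ z ∈ tsupport gext, ∀ k : Fin N, z (Fin.castLE (hN.trans m.le_succ) k) ≠ 0) →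
      ∀ z ∈ tsupport gext, 0 < Q (Fin.init z) ∧ ContinuousAt Q (Fin.init z) := fun _ hD z hz =>
    ⟨Finset.prod_pos fun k _ => rpow_pos_of_pos (norm_pos_iff.2 (hD z hz k)) _,
      continuousAt_prod_norm_rpow _ _ (hD z hz)⟩
  have hsnoc (x : Fin m → ℂ) (k : Fin N) :
      (Fin.snoc x 0 : Fin (m + 1) → ℂ) (Fin.castLE (hN.trans m.le_succ) k) =
        x (Fin.castLE hN k) :=
    Fin.snoc_castSucc (α := fun _ => ℂ) (i := Fin.castLE hN k) ..
  have hsame (x : Fin m → ℂ) : gext₁ (Fin.snoc x 0) = gext₂ (Fin.snoc x 0) := by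
    by_cases hx : ∀ k, x (Fin.castLE hN k) ≠ 0
    · exact (hrestr₁ x hx).trans (hrestr₂ x hx).symm
    · push Not at hx
      obtain ⟨k, hk⟩ := hx
      rw [image_eq_zero_of_notMem_tsupport fun hz => hgextD₁ _ hz k (by rw [hsnoc, hk]),
        image_eq_zero_of_notMem_tsupport fun hz => hgextD₂ _ hz k (by rw [hsnoc, hk])]
  have h₁ := tendsto_setIntegral_unitPolydisc_logBand (by fun_prop) hgext₁ hgextsupp₁
    (hQ _ hgextD₁)
  have h₂ := tendsto_setIntegral_unitPolydisc_logBand (by fun_prop) hgext₂ hgextsupp₂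
    (hQ _ hgextD₂)
  simp_rw [hsame] at h₁
  exact (h₁.limsup_eq.trans h₂.liminf_eq.symm).le
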